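/- arXiv:1007.2315 — 3 statements merged into one kernel-verified Lean document; each statement's English description precedes it below -/
import Mathlib

section
/- Let 0 ≤ ε ≤ 1/2, let t ≥ 0 and δ ≥ 0, and let f, g : {0,1}^n → {0,1}^k be functions whose output distributions (under a uniformly random input) are δ-close to min-entropy t. Then Pr_{(x,y)_ε}[f(x) = g(y)] ≤ 2^{-tε/(1-ε)} + 2δ. -/
open Classical

/-- The weight of a pair `(x, y)` under the distribution `(x,y)_ε`: the `n`
coordinate pairs are independent, each pair equal with probability `(1-ε)/2 + (1-ε)/2`
split as `00`, `11` w.p. `(1-ε)/2` each and `01`, `10` w.p. `ε/2` each. -/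
noncomputable def pairWeight (ε : ℝ) {n : ℕ} (x y : Fin n → Bool) : ℝ :=
  ∏ i, if x i = y i then (1 - ε) / 2 else ε / 2

/-- `Pr_{(x,y)_ε}[P x y]`. -/
noncomputable def prPair (ε : ℝ) {n : ℕ}
    (P : (Fin n → Bool) → (Fin n → Bool) → Prop) : ℝ :=
  ∑ x : Fin n → Bool, ∑ y : Fin n → Bool, if P x y then pairWeight ε x y else 0

/-- The output distribution of `f` on a uniformly random input. -/
noncomputable def outDist {n k : ℕ} (f : (Fin n → Bool) → (Fin k → Bool))
    (z : Fin k → Bool) : ℝ :=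
  (∑ x : Fin n → Bool, if f x = z then (1 : ℝ) else 0) / 2 ^ n

/-- `D` is `δ`-close (in statistical distance `Σ |D - D'|`) to a distribution `D'`
of min-entropy `t` (i.e. every element has probability at most `2^{-t}`). -/
def CloseToMinEntropy {k : ℕ} (D : (Fin k → Bool) → ℝ) (δ t : ℝ) : Prop :=
  ∃ D' : (Fin k → Bool) → ℝ, (∀ z, 0 ≤ D' z) ∧ (∑ z, D' z = 1) ∧
    (∀ z, D' z ≤ (2 : ℝ) ^ (-t)) ∧ (∑ z, |D z - D' z|) ≤ δ

/-! Put `p = 2 - 2ε` and `c = 1/p`. For each `z`, the probability that `f x = z = g y` is at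
most `P_f(z)`, at most `P_g(z)`, and, by the hypercontractive inequality
`E[a(x) b(y)] ≤ ‖a‖_p ‖b‖_p` applied to indicators, at most `P_f(z)^c P_g(z)^c`.
The hypercontractive inequality tensorizes over coordinates, so it reduces to one bit, where
it follows from Cauchy–Schwarz and `(1+s)^p + (1-s)^p ≥ 2 + p(p-1)s²`.
The minimum of the three bounds is 1-Lipschitz in each argument, so `P_f`, `P_g` may be
replaced by the nearby min-entropy distributions `D_f`, `D_g` at cost `2δ`. Finally AM-GM and
`D ≤ 2^{-t}` give `Σ_z D_f(z)^c D_g(z)^c ≤ (2^{-t})^{2c-1} = 2^{-tε/(1-ε)}`. -/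

open Finset

open Set in
lemma two_mul_mul_le_one_add_rpow_sub_one_sub_rpow {q s : ℝ} (hq0 : 0 ≤ q) (hq1 : q ≤ 1)
    (hs0 : 0 ≤ s) (hs1 : s ≤ 1) : 2 * q * s ≤ (1 + s) ^ q - (1 - s) ^ q := by
  have hmono : MonotoneOn (fun u : ℝ => (1 + u) ^ q - (1 - u) ^ q - 2 * q * u) (Icc 0 1) := by
    refine monotoneOn_of_hasDerivWithinAt_nonneg (convex_Icc 0 1)
      (f' := fun u => q * ((1 + u) ^ (q - 1) + (1 - u) ^ (q - 1) - 2))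
      (by have := Real.continuous_rpow_const hq0; fun_prop) (fun u hu => ?_) (fun u hu => ?_)
    all_goals rw [interior_Icc] at hu; obtain ⟨hu0, hu1⟩ := hu
    · refine HasDerivAt.hasDerivWithinAt ?_
      refine (((((hasDerivAt_id u).const_add 1).rpow_const (Or.inl ?_)).sub
        (((hasDerivAt_id u).const_sub 1).rpow_const (Or.inl ?_))).sub
        ((hasDerivAt_id u).const_mul (2 * q))).congr_deriv ?_
      all_goals simp only [id]
      · linarith
      · linarith
      · ring
    · -- `(1 + u) ^ (q - 1) * (1 - u) ^ (q - 1) = (1 - u ^ 2) ^ (q - 1) ≥ 1`, then AM-GM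
      have hX := Real.rpow_pos_of_pos (by linarith : 0 < 1 + u) (q - 1)
      have hY := Real.rpow_pos_of_pos (by linarith : 0 < 1 - u) (q - 1)
      have hXY : 1 ≤ (1 + u) ^ (q - 1) * (1 - u) ^ (q - 1) := by
        rw [← Real.mul_rpow (by linarith) (by linarith)]
        exact Real.one_le_rpow_of_pos_of_le_one_of_nonpos (by nlinarith) (by nlinarith)
          (by linarith)
      nlinarith [sq_nonneg ((1 + u) ^ (q - 1) - (1 - u) ^ (q - 1))]
  simpa using hmono ⟨le_rfl, zero_le_one⟩ ⟨hs0, hs1⟩ hs0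

open Set in
lemma two_add_mul_sq_le_one_add_rpow_add_one_sub_rpow {p s : ℝ} (hp1 : 1 ≤ p) (hp2 : p ≤ 2)
    (hs0 : -1 ≤ s) (hs1 : s ≤ 1) : 2 + p * (p - 1) * s ^ 2 ≤ (1 + s) ^ p + (1 - s) ^ p := by
  wlog hs : 0 ≤ s generalizing s with H
  · have := H (s := -s) (by linarith) (by linarith) (by linarith)
    rwa [neg_sq, ← sub_eq_add_neg, sub_neg_eq_add, add_comm ((1 - s) ^ p)] at this
  have hmono : MonotoneOn
      (fun u : ℝ => (1 + u) ^ p + (1 - u) ^ p - 2 - p * (p - 1) * u ^ 2) (Icc 0 1) := by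
    refine monotoneOn_of_hasDerivWithinAt_nonneg (convex_Icc 0 1)
      (f' := fun u => p * ((1 + u) ^ (p - 1) - (1 - u) ^ (p - 1)) - 2 * p * (p - 1) * u)
      (by have := Real.continuous_rpow_const (by linarith : 0 ≤ p); fun_prop)
      (fun u hu => ?_) (fun u hu => ?_)
    all_goals rw [interior_Icc] at hu; obtain ⟨hu0, hu1⟩ := hu
    · refine HasDerivAt.hasDerivWithinAt ?_
      refine ((((((hasDerivAt_id u).const_add 1).rpow_const (Or.inr hp1)).add
        (((hasDerivAt_id u).const_sub 1).rpow_const (Or.inr hp1))).sub_const 2).sub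
        ((hasDerivAt_pow 2 u).const_mul (p * (p - 1)))).congr_deriv ?_
      simp only [id]; push_cast; ring
    · have := two_mul_mul_le_one_add_rpow_sub_one_sub_rpow (q := p - 1) (by linarith)
        (by linarith) hu0.le hu1.le
      nlinarith
  have := hmono ⟨le_rfl, zero_le_one⟩ ⟨hs, hs1⟩ hs
  norm_num at this
  linarith

lemma sqrt_sq_add_mul_sq_le_rpow_mean {ρ a b : ℝ} (hρ0 : 0 ≤ ρ) (hρ1 : ρ ≤ 1)
    (ha : 0 ≤ a) (hb : 0 ≤ b) :
    √(((a + b) / 2) ^ 2 + ρ * ((a - b) / 2) ^ 2) ≤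
      ((a ^ (1 + ρ) + b ^ (1 + ρ)) / 2) ^ (1 + ρ)⁻¹ := by
  set p := 1 + ρ
  rcases (add_nonneg ha hb).eq_or_lt with hab | hab
  · obtain ⟨rfl, rfl⟩ : a = 0 ∧ b = 0 := ⟨by linarith, by linarith⟩
    simp only [add_zero, sub_zero, zero_div, ne_eq, OfNat.ofNat_ne_zero, not_false_eq_true,
      zero_pow, mul_zero, Real.sqrt_zero]
    positivity
  set m := (a + b) / 2
  set s := (a - b) / (a + b)
  have hm : 0 < m := by positivity
  have hs0 : -1 ≤ s := by rw [le_div_iff₀ hab]; linarith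
  have hs1 : s ≤ 1 := by rw [div_le_one hab]; linarith
  have ha' : a = m * (1 + s) := by simp only [m, s]; field_simp; ring
  have hb' : b = m * (1 - s) := by simp only [m, s]; field_simp; ring
  have key : (1 + ρ * s ^ 2) ^ (p / 2) ≤ ((1 + s) ^ p + (1 - s) ^ p) / 2 := calc
    _ ≤ 1 + p / 2 * (ρ * s ^ 2) :=
      rpow_one_add_le_one_add_mul_self (by nlinarith) (by positivity) (by linarith)
    _ ≤ _ := by
      nlinarith [two_add_mul_sq_le_one_add_rpow_add_one_sub_rpow (p := p) (by linarith)
        (by linarith) hs0 hs1]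
  have hX : ((a + b) / 2) ^ 2 + ρ * ((a - b) / 2) ^ 2 = m ^ 2 * (1 + ρ * s ^ 2) := by
    rw [ha', hb']; ring
  rw [Real.le_rpow_inv_iff_of_pos (Real.sqrt_nonneg _) (by positivity) (by positivity), hX,
    Real.sqrt_mul' _ (by positivity), Real.sqrt_sq hm.le, Real.sqrt_eq_rpow,
    Real.mul_rpow hm.le (by positivity), ← Real.rpow_mul (by positivity), ha', hb',
    Real.mul_rpow hm.le (by linarith), Real.mul_rpow hm.le (by linarith), ← mul_add,
    mul_div_assoc, one_div_mul_eq_div]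
  gcongr

lemma two_point_hypercontractive {ε a₀ a₁ b₀ b₁ : ℝ} (hε0 : 0 ≤ ε) (hε1 : ε ≤ 1 / 2)
    (ha₀ : 0 ≤ a₀) (ha₁ : 0 ≤ a₁) (hb₀ : 0 ≤ b₀) (hb₁ : 0 ≤ b₁) :
    (1 - ε) / 2 * (a₀ * b₀ + a₁ * b₁) + ε / 2 * (a₀ * b₁ + a₁ * b₀) ≤
      ((a₀ ^ (2 - 2 * ε) + a₁ ^ (2 - 2 * ε)) / 2) ^ (2 - 2 * ε)⁻¹ *
        ((b₀ ^ (2 - 2 * ε) + b₁ ^ (2 - 2 * ε)) / 2) ^ (2 - 2 * ε)⁻¹ := by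
  set ρ := 1 - 2 * ε
  have hρ0 : 0 ≤ ρ := by linarith
  have hp : 2 - 2 * ε = 1 + ρ := by ring
  set x₁ := (a₀ + a₁) / 2
  set x₂ := (a₀ - a₁) / 2
  set y₁ := (b₀ + b₁) / 2
  set y₂ := (b₀ - b₁) / 2
  have hcs : (x₁ * y₁ + ρ * (x₂ * y₂)) ^ 2 ≤ (x₁ ^ 2 + ρ * x₂ ^ 2) * (y₁ ^ 2 + ρ * y₂ ^ 2) := by
    nlinarith [mul_nonneg hρ0 (sq_nonneg (x₁ * y₂ - x₂ * y₁))]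
  rw [hp]
  calc (1 - ε) / 2 * (a₀ * b₀ + a₁ * b₁) + ε / 2 * (a₀ * b₁ + a₁ * b₀)
      = x₁ * y₁ + ρ * (x₂ * y₂) := by ring
    _ ≤ √(x₁ ^ 2 + ρ * x₂ ^ 2) * √(y₁ ^ 2 + ρ * y₂ ^ 2) := by
      rw [← Real.sqrt_mul (by positivity)]
      exact (le_abs_self _).trans (Real.abs_le_sqrt hcs)
    _ ≤ _ := by
      gcongr
      · exact sqrt_sq_add_mul_sq_le_rpow_mean hρ0 (by linarith) ha₀ ha₁
      · exact sqrt_sq_add_mul_sq_le_rpow_mean hρ0 (by linarith) hb₀ hb₁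

lemma sum_fun_fin_succ {n : ℕ} {M : Type*} [AddCommMonoid M] (F : (Fin (n + 1) → Bool) → M) :
    ∑ x, F x = ∑ x₀, ∑ x, F (Fin.cons x₀ x) := by
  rw [← (Fin.consEquiv fun _ => Bool).sum_comp F, Fintype.sum_prod_type]
  rfl

lemma pairWeight_cons (ε : ℝ) {n : ℕ} (x₀ y₀ : Bool) (x y : Fin n → Bool) :
    pairWeight ε (Fin.cons x₀ x) (Fin.cons y₀ y) =
      (if x₀ = y₀ then (1 - ε) / 2 else ε / 2) * pairWeight ε x y := by
  simp [pairWeight, Fin.prod_univ_succ]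

lemma pairWeight_nonneg {ε : ℝ} (hε0 : 0 ≤ ε) (hε1 : ε ≤ 1) {n : ℕ} (x y : Fin n → Bool) :
    0 ≤ pairWeight ε x y :=
  prod_nonneg fun i _ => by split_ifs <;> linarith

lemma pairWeight_comm (ε : ℝ) {n : ℕ} (x y : Fin n → Bool) :
    pairWeight ε x y = pairWeight ε y x := by
  simp only [pairWeight, eq_comm]

lemma sum_pairWeight_right (ε : ℝ) {n : ℕ} (x : Fin n → Bool) :
    ∑ y, pairWeight ε x y = (2 ^ n)⁻¹ := by
  simp only [pairWeight]
  rw [← Fintype.prod_sum (fun i b => if x i = b then (1 - ε) / 2 else ε / 2)]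
  have h : ∀ i, ∑ b, (if x i = b then (1 - ε) / 2 else ε / 2) = 2⁻¹ := fun i => by
    cases x i <;> simp <;> ring
  rw [prod_congr rfl fun i _ => h i, prod_const, card_univ, Fintype.card_fin, inv_pow]

/-- `‖a‖_p = (E_x a(x)^p)^{1/p}` for uniform `x`. -/
noncomputable def meanRpowNorm {n : ℕ} (p : ℝ) (a : (Fin n → Bool) → ℝ) : ℝ :=
  ((∑ x, a x ^ p) / 2 ^ n) ^ p⁻¹

lemma meanRpowNorm_nonneg {n : ℕ} (p : ℝ) {a : (Fin n → Bool) → ℝ} (ha : ∀ x, 0 ≤ a x) :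
    0 ≤ meanRpowNorm p a :=
  Real.rpow_nonneg (div_nonneg (sum_nonneg fun x _ => Real.rpow_nonneg (ha x) p) (by positivity)) _

lemma meanRpowNorm_succ {n : ℕ} {p : ℝ} (hp : p ≠ 0) {a : (Fin (n + 1) → Bool) → ℝ}
    (ha : ∀ x, 0 ≤ a x) :
    meanRpowNorm p a = ((meanRpowNorm p (fun x => a (Fin.cons false x)) ^ p +
      meanRpowNorm p (fun x => a (Fin.cons true x)) ^ p) / 2) ^ p⁻¹ := by
  have hpow : ∀ x₀, meanRpowNorm p (fun x => a (Fin.cons x₀ x)) ^ p =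
      (∑ x, a (Fin.cons x₀ x) ^ p) / 2 ^ n := fun x₀ =>
    Real.rpow_inv_rpow (div_nonneg (sum_nonneg fun x _ => Real.rpow_nonneg (ha _) p)
      (by positivity)) hp
  rw [hpow, hpow, meanRpowNorm, sum_fun_fin_succ, Fintype.sum_bool, pow_succ]
  congr 1
  field_simp
  ring

lemma meanRpowNorm_indicator {n : ℕ} {p : ℝ} (hp : p ≠ 0) (P : (Fin n → Bool) → Prop)
    [DecidablePred P] :
    meanRpowNorm p (fun x => if P x then (1 : ℝ) else 0) =
      ((∑ x, if P x then (1 : ℝ) else 0) / 2 ^ n) ^ p⁻¹ := by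
  simp only [meanRpowNorm]
  congr 3
  ext x
  split_ifs <;> simp [hp]

theorem sum_pairWeight_mul_le_meanRpowNorm_mul {ε : ℝ} (hε0 : 0 ≤ ε) (hε1 : ε ≤ 1 / 2) {n : ℕ}
    (a b : (Fin n → Bool) → ℝ) (ha : ∀ x, 0 ≤ a x) (hb : ∀ y, 0 ≤ b y) :
    ∑ x, ∑ y, pairWeight ε x y * (a x * b y) ≤
      meanRpowNorm (2 - 2 * ε) a * meanRpowNorm (2 - 2 * ε) b := by
  have hp : 2 - 2 * ε ≠ 0 := by linarith
  induction n with
  | zero =>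
    simp [pairWeight, meanRpowNorm, Real.rpow_rpow_inv (ha _) hp, Real.rpow_rpow_inv (hb _) hp]
  | succ n ih =>
    set A := fun x₀ => meanRpowNorm (2 - 2 * ε) (fun x => a (Fin.cons x₀ x))
    set B := fun y₀ => meanRpowNorm (2 - 2 * ε) (fun y => b (Fin.cons y₀ y))
    calc ∑ x, ∑ y, pairWeight ε x y * (a x * b y)
        = ∑ x₀, ∑ y₀, (if x₀ = y₀ then (1 - ε) / 2 else ε / 2) *
            ∑ x, ∑ y, pairWeight ε x y * (a (Fin.cons x₀ x) * b (Fin.cons y₀ y)) := by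
          simp_rw [sum_fun_fin_succ, pairWeight_cons, mul_sum, mul_assoc]
          refine sum_congr rfl fun x₀ _ => ?_
          rw [sum_comm]
      _ ≤ ∑ x₀, ∑ y₀, (if x₀ = y₀ then (1 - ε) / 2 else ε / 2) * (A x₀ * B y₀) := by
          gcongr with x₀ _ y₀
          · split_ifs <;> linarith
          · exact ih _ _ (fun x => ha _) (fun y => hb _)
      _ = (1 - ε) / 2 * (A false * B false + A true * B true) +
            ε / 2 * (A false * B true + A true * B false) := by
          simp only [Fintype.sum_bool, ite_mul, ↓reduceIte, Bool.true_eq_false, Bool.false_eq_true]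
          ring
      _ ≤ _ := by
          rw [meanRpowNorm_succ hp ha, meanRpowNorm_succ hp hb]
          exact two_point_hypercontractive hε0 hε1 (meanRpowNorm_nonneg _ fun x => ha _)
            (meanRpowNorm_nonneg _ fun x => ha _) (meanRpowNorm_nonneg _ fun y => hb _)
            (meanRpowNorm_nonneg _ fun y => hb _)

section prPair

variable {n : ℕ} {ε : ℝ}

lemma prPair_eq_sum_prPair_and {k : ℕ} (f g : (Fin n → Bool) → (Fin k → Bool)) :
    prPair ε (fun x y => f x = g y) = ∑ z, prPair ε (fun x y => f x = z ∧ g y = z) := by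
  simp only [prPair]
  rw [eq_comm, sum_comm]
  refine sum_congr rfl fun x _ => ?_
  rw [sum_comm]
  refine sum_congr rfl fun y _ => ?_
  simp [ite_and, eq_comm]

lemma prPair_swap (P : (Fin n → Bool) → (Fin n → Bool) → Prop) :
    prPair ε P = prPair ε (fun y x => P x y) := by
  simp only [prPair]
  rw [sum_comm]
  simp only [pairWeight_comm ε]

lemma prPair_and_le_left (hε0 : 0 ≤ ε) (hε1 : ε ≤ 1) (P Q : (Fin n → Bool) → Prop)
    [DecidablePred P] :
    prPair ε (fun x y => P x ∧ Q y) ≤ (∑ x, if P x then (1 : ℝ) else 0) / 2 ^ n := by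
  calc prPair ε (fun x y => P x ∧ Q y)
      ≤ ∑ x, ∑ y, if P x then pairWeight ε x y else 0 := by
        refine sum_le_sum fun x _ => sum_le_sum fun y _ => ?_
        split_ifs <;> simp_all [pairWeight_nonneg hε0 hε1]
    _ = (∑ x, if P x then (1 : ℝ) else 0) / 2 ^ n := by
        rw [sum_div]
        refine sum_congr rfl fun x _ => ?_
        split_ifs <;> simp [sum_pairWeight_right]

lemma prPair_and_le_right (hε0 : 0 ≤ ε) (hε1 : ε ≤ 1) (P Q : (Fin n → Bool) → Prop)
    [DecidablePred Q] :
    prPair ε (fun x y => P x ∧ Q y) ≤ (∑ y, if Q y then (1 : ℝ) else 0) / 2 ^ n := by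
  rw [prPair_swap]
  simpa only [and_comm] using prPair_and_le_left hε0 hε1 Q P

lemma prPair_and_le_rpow_mul_rpow (hε0 : 0 ≤ ε) (hε1 : ε ≤ 1 / 2) (P Q : (Fin n → Bool) → Prop)
    [DecidablePred P] [DecidablePred Q] :
    prPair ε (fun x y => P x ∧ Q y) ≤
      ((∑ x, if P x then (1 : ℝ) else 0) / 2 ^ n) ^ (2 - 2 * ε)⁻¹ *
        ((∑ y, if Q y then (1 : ℝ) else 0) / 2 ^ n) ^ (2 - 2 * ε)⁻¹ := by
  have hp : 2 - 2 * ε ≠ 0 := by linarith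
  rw [← meanRpowNorm_indicator hp, ← meanRpowNorm_indicator hp]
  convert sum_pairWeight_mul_le_meanRpowNorm_mul hε0 hε1 (fun x => if P x then (1 : ℝ) else 0)
    (fun y => if Q y then (1 : ℝ) else 0) (fun x => by positivity) (fun y => by positivity) using 1
  refine sum_congr rfl fun x _ => sum_congr rfl fun y _ => ?_
  split_ifs <;> simp_all

end prPair

noncomputable def overlapBound (c p q : ℝ) : ℝ := min p (min q (p ^ c * q ^ c))

section overlapBound

variable {c p p' q q' : ℝ}

lemma overlapBound_comm (c p q : ℝ) : overlapBound c p q = overlapBound c q p := by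
  rw [overlapBound, overlapBound, mul_comm, min_left_comm]

lemma overlapBound_le_left (c p q : ℝ) : overlapBound c p q ≤ p := min_le_left _ _

lemma overlapBound_le_rpow_mul_rpow (c p q : ℝ) : overlapBound c p q ≤ p ^ c * q ^ c :=
  (min_le_right _ _).trans (min_le_right _ _)

lemma overlapBound_mono_left (hc : 0 ≤ c) (hp : 0 ≤ p) (hq : 0 ≤ q) (h : p ≤ p') :
    overlapBound c p q ≤ overlapBound c p' q := by
  unfold overlapBound
  gcongr

lemma mul_overlapBound_le {l : ℝ} (hc1 : c ≤ 1) (hl0 : 0 ≤ l) (hl1 : l ≤ 1)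
    (hp : 0 ≤ p) (hq : 0 ≤ q) : l * overlapBound c p q ≤ overlapBound c (l * p) q := by
  rw [overlapBound, overlapBound, mul_min_of_nonneg _ _ hl0, mul_min_of_nonneg _ _ hl0,
    Real.mul_rpow hl0 hp]
  refine min_le_min le_rfl (min_le_min (mul_le_of_le_one_left hq hl1) ?_)
  rw [← mul_assoc]
  gcongr
  exact Real.self_le_rpow_of_le_one hl0 hl1 hc1

lemma overlapBound_le_add_abs_sub_left (hc0 : 0 ≤ c) (hc1 : c ≤ 1) (hp : 0 ≤ p) (hp' : 0 ≤ p')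
    (hq : 0 ≤ q) : overlapBound c p q ≤ overlapBound c p' q + |p - p'| := by
  rcases le_or_gt p p' with h | h
  · linarith [overlapBound_mono_left hc0 hp hq h, abs_nonneg (p - p')]
  -- `p' = l p` with `l = p' / p`: scaling by `l` loses at most `(1 - l) p = p - p'`
  set l := p' / p
  have hp : 0 < p := hp'.trans_lt h
  have hl1 : l ≤ 1 := (div_le_one hp).2 h.le
  have hlp : l * p = p' := div_mul_cancel₀ _ hp.ne'
  have hscale := mul_overlapBound_le hc1 (by positivity) hl1 hp.le hq
  have hloss := mul_le_mul_of_nonneg_left (overlapBound_le_left c p q) (sub_nonneg.2 hl1)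
  rw [hlp] at hscale
  have hdiff : p - p' = (1 - l) * p := by rw [← hlp]; ring
  rw [abs_of_pos (sub_pos.2 h), hdiff]
  linarith

lemma overlapBound_le_add_abs_sub_add_abs_sub (hc0 : 0 ≤ c) (hc1 : c ≤ 1) (hp : 0 ≤ p)
    (hp' : 0 ≤ p') (hq : 0 ≤ q) (hq' : 0 ≤ q') :
    overlapBound c p q ≤ overlapBound c p' q' + |p - p'| + |q - q'| := calc
  overlapBound c p q ≤ overlapBound c p' q + |p - p'| :=
    overlapBound_le_add_abs_sub_left hc0 hc1 hp hp' hq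
  _ = overlapBound c q p' + |p - p'| := by rw [overlapBound_comm]
  _ ≤ overlapBound c q' p' + |q - q'| + |p - p'| := by
    gcongr
    exact overlapBound_le_add_abs_sub_left hc0 hc1 hq hq' hp'
  _ = overlapBound c p' q' + |p - p'| + |q - q'| := by rw [overlapBound_comm]; ring

end overlapBound

lemma outDist_nonneg {n k : ℕ} (f : (Fin n → Bool) → (Fin k → Bool)) (z : Fin k → Bool) :
    0 ≤ outDist f z := by
  unfold outDist
  positivity

lemma prPair_eq_and_eq_le_overlapBound {n k : ℕ} {ε : ℝ} (hε0 : 0 ≤ ε) (hε1 : ε ≤ 1 / 2)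
    (f g : (Fin n → Bool) → (Fin k → Bool)) (z : Fin k → Bool) :
    prPair ε (fun x y => f x = z ∧ g y = z) ≤
      overlapBound (2 - 2 * ε)⁻¹ (outDist f z) (outDist g z) :=
  le_min (prPair_and_le_left hε0 (by linarith) (f · = z) (g · = z))
    (le_min (prPair_and_le_right hε0 (by linarith) (f · = z) (g · = z))
      (prPair_and_le_rpow_mul_rpow hε0 hε1 (f · = z) (g · = z)))

section MinEntropy

variable {ι : Type*} [Fintype ι] {D D' : ι → ℝ} {m : ℝ}

lemma sum_rpow_le_of_le {r : ℝ} (hD0 : ∀ i, 0 ≤ D i) (hD1 : ∑ i, D i = 1) (hDm : ∀ i, D i ≤ m)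
    (hr : 1 ≤ r) : ∑ i, D i ^ r ≤ m ^ (r - 1) := calc
  ∑ i, D i ^ r = ∑ i, D i ^ (r - 1) * D i := by
    refine sum_congr rfl fun i _ => ?_
    rw [← Real.rpow_add_one' (hD0 i) (by linarith), sub_add_cancel]
  _ ≤ ∑ i, m ^ (r - 1) * D i := sum_le_sum fun i _ =>
    mul_le_mul_of_nonneg_right (Real.rpow_le_rpow (hD0 i) (hDm i) (by linarith)) (hD0 i)
  _ = m ^ (r - 1) := by rw [← mul_sum, hD1, mul_one]

lemma sum_rpow_mul_rpow_le {c : ℝ} (hD0 : ∀ i, 0 ≤ D i) (hD'0 : ∀ i, 0 ≤ D' i)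
    (hD1 : ∑ i, D i = 1) (hD'1 : ∑ i, D' i = 1) (hDm : ∀ i, D i ≤ m) (hD'm : ∀ i, D' i ≤ m)
    (hc : 1 / 2 ≤ c) : ∑ i, D i ^ c * D' i ^ c ≤ m ^ (2 * c - 1) := calc
  ∑ i, D i ^ c * D' i ^ c ≤ ∑ i, (D i ^ (2 * c) + D' i ^ (2 * c)) / 2 := by
    refine sum_le_sum fun i _ => ?_
    rw [mul_comm 2 c, Real.rpow_mul (hD0 i), Real.rpow_mul (hD'0 i)]
    norm_cast
    linarith [two_mul_le_add_sq (D i ^ c) (D' i ^ c)]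
  _ ≤ (m ^ (2 * c - 1) + m ^ (2 * c - 1)) / 2 := by
    rw [← sum_div, sum_add_distrib]
    gcongr
    · exact sum_rpow_le_of_le hD0 hD1 hDm (by linarith)
    · exact sum_rpow_le_of_le hD'0 hD'1 hD'm (by linarith)
  _ = m ^ (2 * c - 1) := by ring

end MinEntropy

theorem stmt0_general {n k : ℕ} (ε t δ : ℝ) (hε0 : 0 ≤ ε) (hε1 : ε ≤ 1 / 2)
    (f g : (Fin n → Bool) → (Fin k → Bool))
    (hf : CloseToMinEntropy (outDist f) δ t)
    (hg : CloseToMinEntropy (outDist g) δ t) :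
    prPair ε (fun x y => f x = g y) ≤ (2 : ℝ) ^ (-(t * ε) / (1 - ε)) + 2 * δ := by
  obtain ⟨Df, hDf0, hDf1, hDfm, hDfδ⟩ := hf
  obtain ⟨Dg, hDg0, hDg1, hDgm, hDgδ⟩ := hg
  set c := (2 - 2 * ε)⁻¹
  have hc1 : c ≤ 1 := inv_le_one_of_one_le₀ (by linarith)
  have hc2 : 1 / 2 ≤ c := by rw [one_div]; exact inv_anti₀ (by linarith) (by linarith)
  have hexp : ((2 : ℝ) ^ (-t)) ^ (2 * c - 1) = 2 ^ (-(t * ε) / (1 - ε)) := by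
    rw [← Real.rpow_mul zero_le_two]
    congr 1
    have : 1 - ε ≠ 0 := by linarith
    simp only [c]
    field_simp
    ring
  calc prPair ε (fun x y => f x = g y)
      = ∑ z, prPair ε (fun x y => f x = z ∧ g y = z) := prPair_eq_sum_prPair_and f g
    _ ≤ ∑ z, (overlapBound c (Df z) (Dg z) + |outDist f z - Df z| + |outDist g z - Dg z|) :=
      sum_le_sum fun z _ => (prPair_eq_and_eq_le_overlapBound hε0 hε1 f g z).trans
        (overlapBound_le_add_abs_sub_add_abs_sub (by positivity) hc1 (outDist_nonneg f z)
          (hDf0 z) (outDist_nonneg g z) (hDg0 z))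
    _ ≤ ∑ z, Df z ^ c * Dg z ^ c + δ + δ := by
      simp only [sum_add_distrib]
      gcongr with z
      exact overlapBound_le_rpow_mul_rpow c _ _
    _ ≤ 2 ^ (-(t * ε) / (1 - ε)) + 2 * δ := by
      linarith [sum_rpow_mul_rpow_le hDf0 hDg0 hDf1 hDg1 hDfm hDgm hc2]

theorem stmt0 {n k : ℕ} (ε t δ : ℝ) (hε0 : 0 ≤ ε) (hε1 : ε ≤ 1 / 2)
    (ht : 0 ≤ t) (hδ : 0 ≤ δ)
    (f g : (Fin n → Bool) → (Fin k → Bool))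
    (hf : CloseToMinEntropy (outDist f) δ t)
    (hg : CloseToMinEntropy (outDist g) δ t) :
    prPair ε (fun x y => f x = g y) ≤ (2 : ℝ) ^ (-(t * ε) / (1 - ε)) + 2 * δ :=
  stmt0_general ε t δ hε0 hε1 f g hf hg
end

section
/- Let ≺ be a strict total order on {0,1}^n such that if the Hamming weight of u is smaller than the Hamming weight of v then u ≺ v. Let C ⊆ {0,1}^n, and for c ∈ C define R_c = { x ∈ {0,1}^n : x + c ≺ x + c' for all c' ∈ C with c' ≠ c }. Let C = a + L be an affine subspace, with L a linear subspace of F_2^n and a ∈ F_2^n. Then for all c, c' ∈ L and all x ∈ {0,1}^n: if x ∈ R_{a+c} then x + c' ∈ R_{a+c+c'} (addition over F_2). -/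
/-- Hamming weight of a vector in `F_2^n`. -/
def hamWeight {n : ℕ} (x : Fin n → ZMod 2) : ℕ :=
  (Finset.univ.filter fun i => x i = 1).card

/-- The region `R_c = { x : x + c ≺ x + c' for all c' ∈ C, c' ≠ c }`. -/
def Rregion {n : ℕ} (prec : (Fin n → ZMod 2) → (Fin n → ZMod 2) → Prop)
    (C : Set (Fin n → ZMod 2)) (c : Fin n → ZMod 2) : Set (Fin n → ZMod 2) :=
  {x | ∀ c' ∈ C, c' ≠ c → prec (x + c) (x + c')}

theorem stmt10 {n : ℕ}
    (prec : (Fin n → ZMod 2) → (Fin n → ZMod 2) → Prop)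
    (hto : IsStrictTotalOrder (Fin n → ZMod 2) prec)
    (hwt : ∀ u v : Fin n → ZMod 2, hamWeight u < hamWeight v → prec u v)
    (L : Submodule (ZMod 2) (Fin n → ZMod 2)) (a : Fin n → ZMod 2)
    (C : Set (Fin n → ZMod 2)) (hC : C = {v | ∃ l ∈ L, v = a + l}) :
    ∀ c ∈ L, ∀ c' ∈ L, ∀ x : Fin n → ZMod 2,
      x ∈ Rregion prec C (a + c) → x + c' ∈ Rregion prec C (a + c + c') := by
  intro c hc c' hc' x hx d hd hne
  have h2 : ∀ v : Fin n → ZMod 2, v + v = 0 := fun v =>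
    funext fun i => by
      show v i + v i = 0
      have : (2 : ZMod 2) * v i = 0 := by
        have : (2 : ZMod 2) = 0 := by decide
        rw [this, zero_mul]
      linear_combination this
  obtain ⟨l, hl, rfl⟩ : ∃ l ∈ L, d = a + l := by rw [hC] at hd; exact hd
  have hmem : a + (l + c') ∈ C := by rw [hC]; exact ⟨l + c', L.add_mem hl hc', rfl⟩
  have hne2 : a + (l + c') ≠ a + c := by
    intro h
    apply hne
    have : l + c' = c := by
      have := congrArg (fun v => v + a) h
      simpa [add_comm, add_assoc, add_left_comm] using add_left_cancel h
    rw [← this]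
    have : a + (l + c') + c' = a + l + (c' + c') := by ring
    rw [this, h2, add_zero]
  have key := hx _ hmem hne2
  have e1 : x + c' + (a + c + c') = x + (a + c) := by
    have : x + c' + (a + c + c') = x + (a + c) + (c' + c') := by ring
    rw [this, h2, add_zero]
  have e2 : x + c' + (a + l) = x + (a + (l + c')) := by ring
  rw [Rregion] at *
  simpa [e1, e2] using key
end

section
/- Let 0 < ε ≤ 1/2, set θ = 1 − 2ε, and let t ≥ 0. Let X and Z be independent standard Gaussian random variables. Then Pr[ X > t and θX + sqrt(1 − θ²)·Z > t ] ≥ Pr[X > t] · Pr[Z > sqrt(ε/(1−ε)) · t]. -/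
open MeasureTheory ProbabilityTheory

theorem stmt14 (ε : ℝ) (hε0 : 0 < ε) (hε1 : ε ≤ 1 / 2) (t : ℝ) (ht : 0 ≤ t) :
    ((gaussianReal 0 1).prod (gaussianReal 0 1))
        {p : ℝ × ℝ | t < p.1 ∧
          t < (1 - 2 * ε) * p.1 + Real.sqrt (1 - (1 - 2 * ε) ^ 2) * p.2} ≥
      (gaussianReal 0 1) {x | t < x} *
        (gaussianReal 0 1) {z | Real.sqrt (ε / (1 - ε)) * t < z} := by
  have h1e : 0 < 1 - ε := by linarith
  have hθ0 : 0 ≤ 1 - 2 * ε := by linarith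
  have hcpos : 0 < Real.sqrt (1 - (1 - 2 * ε) ^ 2) := Real.sqrt_pos.2 (by nlinarith)
  have hcs : Real.sqrt (1 - (1 - 2 * ε) ^ 2) * Real.sqrt (ε / (1 - ε)) = 2 * ε := by
    rw [← Real.sqrt_mul (by nlinarith),
      show (1 - (1 - 2 * ε) ^ 2) * (ε / (1 - ε)) = (2 * ε) ^ 2 by field_simp; ring]
    exact Real.sqrt_sq (by linarith)
  have hsub : {x : ℝ | t < x} ×ˢ {z : ℝ | Real.sqrt (ε / (1 - ε)) * t < z} ⊆
      {p : ℝ × ℝ | t < p.1 ∧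
        t < (1 - 2 * ε) * p.1 + Real.sqrt (1 - (1 - 2 * ε) ^ 2) * p.2} := by
    rintro ⟨x, z⟩ ⟨hx, hz⟩
    refine ⟨hx, ?_⟩
    have h1 : (1 - 2 * ε) * t ≤ (1 - 2 * ε) * x := mul_le_mul_of_nonneg_left hx.le hθ0
    have h2 : Real.sqrt (1 - (1 - 2 * ε) ^ 2) * (Real.sqrt (ε / (1 - ε)) * t) <
        Real.sqrt (1 - (1 - 2 * ε) ^ 2) * z := mul_lt_mul_of_pos_left hz hcpos
    rw [← mul_assoc, hcs] at h2
    simp only [Set.mem_setOf_eq]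
    nlinarith
  calc (gaussianReal 0 1) {x | t < x} *
        (gaussianReal 0 1) {z | Real.sqrt (ε / (1 - ε)) * t < z}
      = ((gaussianReal 0 1).prod (gaussianReal 0 1))
          ({x : ℝ | t < x} ×ˢ {z : ℝ | Real.sqrt (ε / (1 - ε)) * t < z}) :=
        (Measure.prod_prod _ _).symm
    _ ≤ _ := measure_mono hsub
end
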